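/- arXiv:math/0409333 — 2 statements merged into one kernel-verified Lean document; each statement's English description precedes it below -/
import Mathlib

section
/- For every point ω ∈ Ω there exists a sequence of signatures λ^{(N)} ∈ SGN(N), N = 1, 2, …, such that ι_N(λ^{(N)}) converges to ω coordinatewise: for every i ≥ 1 the i-th coordinates of α⁺, β⁺, α⁻, β⁻ of ι_N(λ^{(N)}) converge to those of ω, and the coordinates δ⁺, δ⁻ of ι_N(λ^{(N)}) converge to those of ω. In other words, the union of the images ι_N(SGN(N)) is dense in Ω in the product topology. -/
open Filter Topology

/-- A signature of length `N`: a nonincreasing `N`-tuple of integers. -/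
def Signature (N : ℕ) : Type := {l : Fin N → ℤ // Antitone l}

/-- The number of diagonal boxes `d(μ)` of a Young diagram `μ`. -/
def diagLen (μ : YoungDiagram) : ℕ := (μ.cells.filter fun c => c.1 = c.2).card

/-- The Young diagram `λ⁺` whose `i`-th row is `max(λ_i, 0)`. -/
def sigPosDiagram {N : ℕ} (l : Signature N) : YoungDiagram :=
  YoungDiagram.ofRowLens (List.ofFn fun i => (l.1 i).toNat)
    (List.sortedGE_ofFn_iff.mpr fun _ _ h => Int.toNat_le_toNat (l.2 h))

/-- The Young diagram `λ⁻` whose `j`-th row is `max(-λ_{N+1-j}, 0)`. -/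
def sigNegDiagram {N : ℕ} (l : Signature N) : YoungDiagram :=
  YoungDiagram.ofRowLens (List.ofFn fun i => (-(l.1 i.rev)).toNat)
    (List.sortedGE_ofFn_iff.mpr fun _ _ h =>
      Int.toNat_le_toNat (neg_le_neg (l.2 (Fin.rev_le_rev.mpr h))))

/-- `α`-coordinates of `ι_N(λ)`: `α_i = a_i(μ)/N` for `i ≤ d(μ)`, extended by zeros. -/
noncomputable def alphaCoord (N : ℕ) (μ : YoungDiagram) (k : ℕ) : ℝ :=
  if k < diagLen μ then ((μ.rowLen k : ℝ) - k - 1/2) / N else 0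

/-- `β`-coordinates of `ι_N(λ)`: `β_i = b_i(μ)/N` for `i ≤ d(μ)`, extended by zeros. -/
noncomputable def betaCoord (N : ℕ) (μ : YoungDiagram) (k : ℕ) : ℝ :=
  if k < diagLen μ then ((μ.colLen k : ℝ) - k - 1/2) / N else 0

/-- A point `ω = (α⁺, β⁺, α⁻, β⁻, δ⁺, δ⁻)` of the ambient coordinate space. -/
structure OmegaPoint where
  alphaP : ℕ → ℝ
  betaP : ℕ → ℝ
  alphaM : ℕ → ℝ
  betaM : ℕ → ℝ
  deltaP : ℝ
  deltaM : ℝ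

/-- Membership in `Ω`: the `α`'s and `β`'s are nonincreasing sequences of nonnegative
reals, `δ± ≥ 0`, `β⁺_1 + β⁻_1 ≤ 1`, and `Σ_{i≥1}(α±_i + β±_i) ≤ δ±`. -/
def InOmega (ω : OmegaPoint) : Prop :=
  Antitone ω.alphaP ∧ (∀ k, 0 ≤ ω.alphaP k) ∧
  Antitone ω.betaP ∧ (∀ k, 0 ≤ ω.betaP k) ∧
  Antitone ω.alphaM ∧ (∀ k, 0 ≤ ω.alphaM k) ∧
  Antitone ω.betaM ∧ (∀ k, 0 ≤ ω.betaM k) ∧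
  0 ≤ ω.deltaP ∧ 0 ≤ ω.deltaM ∧
  ω.betaP 0 + ω.betaM 0 ≤ 1 ∧
  Summable (fun k => ω.alphaP k + ω.betaP k) ∧
  (∑' k, (ω.alphaP k + ω.betaP k)) ≤ ω.deltaP ∧
  Summable (fun k => ω.alphaM k + ω.betaM k) ∧
  (∑' k, (ω.alphaM k + ω.betaM k)) ≤ ω.deltaM

/-!
Each half `(α, β, δ)` of `ω` is approximated separately. With `m = N^{1/4}`, a scale
`L = N - O(√N)` and `s = ⌊√(N (δ - Σ_{k<m} (α_k + β_k)))⌋`, take the square of side `m + s` and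
append `⌊L α_k⌋ + 1` cells to row `k` and `⌊L β_k⌋ + 1` cells below column `k` for each `k < m`.
Its first `m` modified Frobenius coordinates are `⌊L α_k⌋ + O(√N)` and `⌊L β_k⌋ + O(√N)`, and
the square supplies the missing mass: the diagram has `N δ + o(N)` cells because `m` is small
enough that `m (m + s) = o(N)`. The two diagrams have at most `L (β⁺_1 + β⁻_1) + O(√N) ≤ N` rows
together, which is what it takes for them to be `λ⁺` and `λ⁻` of one signature of length `N`.
-/

open Finset

namespace YoungDiagram

lemma rowLen_eq_zero_of_colLen_zero_le (μ : YoungDiagram) {i : ℕ} (hi : μ.colLen 0 ≤ i) :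
    μ.rowLen i = 0 := by
  by_contra h
  have : (i, 0) ∈ μ := mem_iff_lt_rowLen.mpr (Nat.pos_of_ne_zero h)
  exact absurd (mem_iff_lt_colLen.mp this) (not_lt.mpr hi)

end YoungDiagram

namespace Signature

def ofDiagrams (N : ℕ) (μ ν : YoungDiagram) : Signature N :=
  ⟨fun i => (μ.rowLen i : ℤ) - ν.rowLen i.rev, fun i j hij => by
    have hμ := μ.rowLen_anti i j hij
    have hν := ν.rowLen_anti j.rev i.rev (Fin.rev_le_rev.mpr hij)
    show (μ.rowLen j : ℤ) - ν.rowLen j.rev ≤ μ.rowLen i - ν.rowLen i.rev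
    omega⟩

lemma sigPosDiagram_ofDiagrams {N : ℕ} {μ ν : YoungDiagram} (h : μ.colLen 0 + ν.colLen 0 ≤ N) :
    sigPosDiagram (ofDiagrams N μ ν) = μ := by
  ext ⟨i, j⟩
  simp only [sigPosDiagram, ofDiagrams, YoungDiagram.mem_cells, YoungDiagram.mem_ofRowLens,
    List.length_ofFn, List.getElem_ofFn, Fin.val_rev]
  constructor
  · rintro ⟨hi, hj⟩
    exact YoungDiagram.mem_iff_lt_rowLen.mpr (by omega)
  · intro hij
    have hi : i < μ.colLen 0 :=
      YoungDiagram.mem_iff_lt_colLen.mp (μ.up_left_mem le_rfl (Nat.zero_le j) hij)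
    have hν : ν.rowLen (N - (i + 1)) = 0 := ν.rowLen_eq_zero_of_colLen_zero_le (by omega)
    refine ⟨by omega, ?_⟩
    rw [hν, Nat.cast_zero, sub_zero, Int.toNat_natCast]
    exact YoungDiagram.mem_iff_lt_rowLen.mp hij

lemma sigNegDiagram_ofDiagrams {N : ℕ} {μ ν : YoungDiagram} (h : μ.colLen 0 + ν.colLen 0 ≤ N) :
    sigNegDiagram (ofDiagrams N μ ν) = ν := by
  calc sigNegDiagram (ofDiagrams N μ ν) = sigPosDiagram (ofDiagrams N ν μ) := by
        simp only [sigNegDiagram, sigPosDiagram, ofDiagrams, Fin.rev_rev, neg_sub]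
    _ = ν := sigPosDiagram_ofDiagrams (by omega)

lemma exists_eventually_diagrams_eq {μ ν : ℕ → YoungDiagram}
    (h : ∀ᶠ N in atTop, (μ N).colLen 0 + (ν N).colLen 0 ≤ N) :
    ∃ l : (N : ℕ) → Signature N,
      ∀ᶠ N in atTop, sigPosDiagram (l N) = μ N ∧ sigNegDiagram (l N) = ν N :=
  ⟨fun N => ofDiagrams N (μ N) (ν N),
    h.mono fun _ hN => ⟨sigPosDiagram_ofDiagrams hN, sigNegDiagram_ofDiagrams hN⟩⟩

end Signature

lemma diagLen_transpose (μ : YoungDiagram) : diagLen μ.transpose = diagLen μ := by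
  simp only [diagLen, YoungDiagram.transpose, Equiv.finsetCongr_apply, filter_map, card_map]
  congr 1
  exact filter_congr fun c _ => by simp [eq_comm]

lemma betaCoord_eq_alphaCoord_transpose (N : ℕ) (μ : YoungDiagram) (k : ℕ) :
    betaCoord N μ k = alphaCoord N μ.transpose k := by
  rw [betaCoord, alphaCoord, diagLen_transpose, YoungDiagram.rowLen_transpose]

lemma diagLen_eq_of_forall_mem_iff {μ : YoungDiagram} {d : ℕ} (h : ∀ i, (i, i) ∈ μ ↔ i < d) :
    diagLen μ = d := by
  have : μ.cells.filter (fun c => c.1 = c.2) =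
      (range d).map ⟨fun i => (i, i), fun _ _ h => (Prod.mk.inj h).1⟩ := by
    ext ⟨i, j⟩
    simp only [mem_filter, YoungDiagram.mem_cells, Finset.mem_map, mem_range, Prod.ext_iff]
    constructor
    · rintro ⟨hij, rfl⟩
      exact ⟨i, (h i).mp hij, rfl, rfl⟩
    · rintro ⟨i, hi, rfl, rfl⟩
      exact ⟨(h i).mpr hi, rfl⟩
  rw [diagLen, this, card_map, card_range]

def hookDiagram (m s : ℕ) {A B : ℕ → ℕ} (hA : Antitone A) (hB : Antitone B) : YoungDiagram where
  cells := (range (m + s) ×ˢ range (m + s)) ∪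
    ((range m).biUnion fun i => {i} ×ˢ Ico (m + s) (m + s + A i + 1)) ∪
    ((range m).biUnion fun j => Ico (m + s) (m + s + B j + 1) ×ˢ {j})
  isLowerSet := by
    rintro ⟨i, j⟩ ⟨i', j'⟩ ⟨hi : i' ≤ i, hj : j' ≤ j⟩
    simp only [coe_union, Set.mem_union, mem_coe, mem_product, mem_range, mem_biUnion,
      mem_singleton, mem_Ico]
    rintro ((⟨h1, h2⟩ | ⟨k, hk, rfl, h1, h2⟩) | ⟨k, hk, ⟨h1, h2⟩, rfl⟩)
    · omega
    · have := hA hi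
      by_cases h : j' < m + s
      · omega
      · exact Or.inl (Or.inr ⟨i', by omega, rfl, by omega, by omega⟩)
    · have := hB hj
      by_cases h : i' < m + s
      · omega
      · exact Or.inr ⟨j', by omega, ⟨by omega, by omega⟩, rfl⟩

section hookDiagram

variable {m s : ℕ} {A B : ℕ → ℕ} (hA : Antitone A) (hB : Antitone B)

lemma mem_hookDiagram {i j : ℕ} : (i, j) ∈ hookDiagram m s hA hB ↔
    i < m + s ∧ j < m + s ∨ i < m ∧ m + s ≤ j ∧ j ≤ m + s + A i ∨
      j < m ∧ m + s ≤ i ∧ i ≤ m + s + B j := by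
  rw [← YoungDiagram.mem_cells]
  simp only [hookDiagram, mem_union, mem_product, mem_range,
    mem_biUnion, mem_singleton, mem_Ico]
  constructor
  · rintro ((h | ⟨k, hk, rfl, h1, h2⟩) | ⟨k, hk, ⟨h1, h2⟩, rfl⟩) <;> omega
  · rintro (h | ⟨hi, h1, h2⟩ | ⟨hj, h1, h2⟩)
    · exact Or.inl (Or.inl h)
    · exact Or.inl (Or.inr ⟨i, hi, rfl, h1, by omega⟩)
    · exact Or.inr ⟨j, hj, ⟨h1, by omega⟩, rfl⟩

lemma hookDiagram_transpose : (hookDiagram m s hA hB).transpose = hookDiagram m s hB hA := by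
  ext ⟨i, j⟩
  simp only [YoungDiagram.mem_cells, YoungDiagram.mem_transpose, Prod.swap_prod_mk,
    mem_hookDiagram]
  omega

lemma diagLen_hookDiagram : diagLen (hookDiagram m s hA hB) = m + s :=
  diagLen_eq_of_forall_mem_iff fun i => by rw [mem_hookDiagram]; omega

lemma rowLen_hookDiagram {k : ℕ} (hk : k < m) :
    (hookDiagram m s hA hB).rowLen k = m + s + A k + 1 :=
  eq_of_forall_lt_iff fun j => by rw [← YoungDiagram.mem_iff_lt_rowLen, mem_hookDiagram]; omega

lemma colLen_zero_hookDiagram_le : (hookDiagram m s hA hB).colLen 0 ≤ m + s + B 0 + 1 := by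
  by_contra h
  have := (mem_hookDiagram hA hB).mp (YoungDiagram.mem_iff_lt_colLen.mpr (not_le.mp h))
  omega

lemma card_hookDiagram : (hookDiagram m s hA hB).card =
    (m + s) ^ 2 + ∑ k ∈ range m, (A k + 1) + ∑ k ∈ range m, (B k + 1) := by
  rw [YoungDiagram.card, hookDiagram, card_union_of_disjoint, card_union_of_disjoint,
    card_product, card_range, card_biUnion, card_biUnion]
  · simp only [sq, card_product, card_singleton, Nat.card_Ico, one_mul, mul_one]
    rw [sum_congr rfl fun k _ => (by omega : m + s + A k + 1 - (m + s) = A k + 1),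
      sum_congr rfl fun k _ => (by omega : m + s + B k + 1 - (m + s) = B k + 1)]
  · intro i _ j _ hij
    simp only [Function.onFun, disjoint_left, mem_product, mem_singleton]
    exact fun c h h' => hij (h.2.symm.trans h'.2)
  · intro i _ j _ hij
    simp only [Function.onFun, disjoint_left, mem_product, mem_singleton]
    exact fun c h h' => hij (h.1.symm.trans h'.1)
  all_goals
    rw [disjoint_left]
    rintro ⟨i, j⟩
    simp only [mem_union, mem_product, mem_range, mem_biUnion, mem_singleton, mem_Ico]
    omega

end hookDiagram

lemma tendsto_natFloor_div {u g : ℕ → ℝ} {a : ℝ} (hu : ∀ N, 0 ≤ u N)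
    (hg : Tendsto g atTop atTop) (h : Tendsto (fun N => u N / g N) atTop (𝓝 a)) :
    Tendsto (fun N => (⌊u N⌋₊ : ℝ) / g N) atTop (𝓝 a) := by
  have hlow : Tendsto (fun N => (u N - 1) / g N) atTop (𝓝 a) := by
    simpa [sub_div] using h.sub ((tendsto_const_nhds (x := (1 : ℝ))).div_atTop hg)
  refine tendsto_of_tendsto_of_tendsto_of_le_of_le' hlow h ?_ ?_ <;>
    filter_upwards [hg.eventually_gt_atTop 0] with N hN
  · gcongr
    exact (Nat.sub_one_lt_floor _).le
  · gcongr
    exact Nat.floor_le (hu N)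

lemma tendsto_natFloor_mul_div {L : ℕ → ℕ} (hL : Tendsto (fun N => (L N : ℝ) / N) atTop (𝓝 1))
    {x : ℝ} (hx : 0 ≤ x) : Tendsto (fun N => (⌊(L N : ℝ) * x⌋₊ : ℝ) / N) atTop (𝓝 x) :=
  tendsto_natFloor_div (fun N => by positivity) tendsto_natCast_atTop_atTop
    (by simpa [mul_div_right_comm] using hL.mul_const x)

lemma tendsto_sum_natFloor_mul_div {c : ℕ → ℝ} (hc : ∀ k, 0 ≤ c k) (hsum : Summable c)
    {m L : ℕ → ℕ} (hm : Tendsto m atTop atTop)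
    (hm' : Tendsto (fun N => (m N : ℝ) / N) atTop (𝓝 0))
    (hL : Tendsto (fun N => (L N : ℝ) / N) atTop (𝓝 1)) :
    Tendsto (fun N => (∑ k ∈ range (m N), (⌊(L N : ℝ) * c k⌋₊ : ℝ)) / N) atTop
      (𝓝 (∑' k, c k)) := by
  have hup : Tendsto (fun N => (∑ k ∈ range (m N), (L N : ℝ) * c k) / N) atTop
      (𝓝 (∑' k, c k)) := by
    simpa [← mul_sum, mul_div_right_comm] using hL.mul (hsum.hasSum.tendsto_sum_nat.comp hm)
  have hlow : Tendsto (fun N => (∑ k ∈ range (m N), ((L N : ℝ) * c k - 1)) / N) atTop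
      (𝓝 (∑' k, c k)) := by
    simpa [sum_sub_distrib, sub_div] using hup.sub hm'
  refine tendsto_of_tendsto_of_tendsto_of_le_of_le hlow hup (fun N => ?_) (fun N => ?_) <;>
    gcongr with k
  · exact (Nat.sub_one_lt_floor _).le
  · exact Nat.floor_le (by have := hc k; positivity)

lemma tendsto_sqrt_natCast_atTop : Tendsto (fun N : ℕ => √(N : ℝ)) atTop atTop :=
  Real.tendsto_sqrt_atTop.comp tendsto_natCast_atTop_atTop

lemma tendsto_div_natCast_of_tendsto_div_sqrt {x : ℕ → ℝ} {a : ℝ}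
    (h : Tendsto (fun N => x N / √N) atTop (𝓝 a)) : Tendsto (fun N => x N / N) atTop (𝓝 0) := by
  simpa [div_div, Real.mul_self_sqrt] using h.div_atTop tendsto_sqrt_natCast_atTop

lemma eventually_le_of_tendsto_div_zero {c : ℕ → ℕ}
    (hc : Tendsto (fun N => (c N : ℝ) / N) atTop (𝓝 0)) : ∀ᶠ N in atTop, c N ≤ N := by
  filter_upwards [hc.eventually_lt_const one_pos, eventually_gt_atTop 0] with N h hN
  exact_mod_cast ((div_lt_one (Nat.cast_pos.mpr hN)).mp h).le

lemma tendsto_sub_div_natCast {c : ℕ → ℕ} (hc : Tendsto (fun N => (c N : ℝ) / N) atTop (𝓝 0)) :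
    Tendsto (fun N => ((N - c N : ℕ) : ℝ) / N) atTop (𝓝 1) := by
  have h1 : Tendsto (fun N => 1 - (c N : ℝ) / N) atTop (𝓝 1) := by
    simpa using tendsto_const_nhds.sub hc
  refine h1.congr' ?_
  filter_upwards [eventually_le_of_tendsto_div_zero hc, eventually_gt_atTop 0] with N h hN
  rw [Nat.cast_sub h, sub_div, div_self (Nat.cast_pos.mpr hN).ne']

lemma natFloor_mul_add_natFloor_mul_le {a b : ℝ} (ha : 0 ≤ a) (hb : 0 ≤ b) (hab : a + b ≤ 1)
    (L : ℕ) : ⌊(L : ℝ) * a⌋₊ + ⌊(L : ℝ) * b⌋₊ ≤ L := by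
  have ha' := Nat.floor_le (mul_nonneg L.cast_nonneg ha)
  have hb' := Nat.floor_le (mul_nonneg L.cast_nonneg hb)
  have : (⌊(L : ℝ) * a⌋₊ + ⌊(L : ℝ) * b⌋₊ : ℝ) ≤ L := by nlinarith [L.cast_nonneg (α := ℝ)]
  exact_mod_cast this

lemma tendsto_natSqrt_natSqrt_atTop : Tendsto (fun N => Nat.sqrt (Nat.sqrt N)) atTop atTop := by
  have : Tendsto Nat.sqrt atTop atTop :=
    Monotone.tendsto_atTop_atTop (fun _ _ => Nat.sqrt_le_sqrt) fun b => ⟨b * b, (Nat.sqrt_eq b).ge⟩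
  exact this.comp this

lemma tendsto_natSqrt_natSqrt_div_sqrt :
    Tendsto (fun N => (Nat.sqrt (Nat.sqrt N) : ℝ) / √N) atTop (𝓝 0) := by
  refine squeeze_zero (fun N => by positivity) (fun N => ?_)
    (tendsto_inv_atTop_zero.comp (Real.tendsto_sqrt_atTop.comp tendsto_sqrt_natCast_atTop))
  have hm : (Nat.sqrt (Nat.sqrt N) : ℝ) ≤ √√N :=
    Real.nat_sqrt_le_real_sqrt.trans (Real.sqrt_le_sqrt Real.nat_sqrt_le_real_sqrt)
  calc (Nat.sqrt (Nat.sqrt N) : ℝ) / √N ≤ √√N / √N := by gcongr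
    _ = (√√N)⁻¹ := Real.sqrt_div_self

section hookDiagramLimits

variable {m s : ℕ → ℕ} {A B : ℕ → ℕ → ℕ} (hA : ∀ N, Antitone (A N)) (hB : ∀ N, Antitone (B N))

lemma tendsto_alphaCoord_hookDiagram (hm : Tendsto m atTop atTop)
    (hms : Tendsto (fun N => ((m N + s N : ℕ) : ℝ) / N) atTop (𝓝 0)) {a : ℕ → ℝ}
    (hAa : ∀ k, Tendsto (fun N => (A N k : ℝ) / N) atTop (𝓝 (a k))) (k : ℕ) :
    Tendsto (fun N => alphaCoord N (hookDiagram (m N) (s N) (hA N) (hB N)) k) atTop (𝓝 (a k)) := by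
  have hlim := ((hAa k).add hms).add (tendsto_const_div_atTop_nhds_zero_nat (1 / 2 - k : ℝ))
  rw [add_zero, add_zero] at hlim
  refine hlim.congr' ?_
  filter_upwards [hm.eventually_gt_atTop k] with N hk
  rw [alphaCoord, diagLen_hookDiagram, if_pos (by omega), rowLen_hookDiagram _ _ hk]
  push_cast
  ring

lemma tendsto_betaCoord_hookDiagram (hm : Tendsto m atTop atTop)
    (hms : Tendsto (fun N => ((m N + s N : ℕ) : ℝ) / N) atTop (𝓝 0)) {b : ℕ → ℝ}
    (hBb : ∀ k, Tendsto (fun N => (B N k : ℝ) / N) atTop (𝓝 (b k))) (k : ℕ) :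
    Tendsto (fun N => betaCoord N (hookDiagram (m N) (s N) (hA N) (hB N)) k) atTop (𝓝 (b k)) := by
  simpa only [betaCoord_eq_alphaCoord_transpose, hookDiagram_transpose] using
    tendsto_alphaCoord_hookDiagram hB hA hm hms hBb k

end hookDiagramLimits

structure InOmegaHalf (α β : ℕ → ℝ) (δ : ℝ) : Prop where
  antitone_alpha : Antitone α
  antitone_beta : Antitone β
  alpha_nonneg : ∀ k, 0 ≤ α k
  beta_nonneg : ∀ k, 0 ≤ β k
  summable : Summable fun k => α k + β k
  tsum_le : ∑' k, (α k + β k) ≤ δ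

lemma InOmega.inOmegaHalf_pos {ω : OmegaPoint} (hω : InOmega ω) :
    InOmegaHalf ω.alphaP ω.betaP ω.deltaP := by
  obtain ⟨hα, hα0, hβ, hβ0, -, -, -, -, -, -, -, hs, hle, -, -⟩ := hω
  exact ⟨hα, hβ, hα0, hβ0, hs, hle⟩

lemma InOmega.inOmegaHalf_neg {ω : OmegaPoint} (hω : InOmega ω) :
    InOmegaHalf ω.alphaM ω.betaM ω.deltaM := by
  obtain ⟨-, -, -, -, hα, hα0, hβ, hβ0, -, -, -, -, -, hs, hle⟩ := hω
  exact ⟨hα, hβ, hα0, hβ0, hs, hle⟩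

lemma antitone_natFloor_mul {α : ℕ → ℝ} (hα : Antitone α) (L : ℕ) :
    Antitone fun k => ⌊(L : ℝ) * α k⌋₊ :=
  fun _ _ h => Nat.floor_mono (mul_le_mul_of_nonneg_left (hα h) L.cast_nonneg)

noncomputable def squareSide (α β : ℕ → ℝ) (δ : ℝ) (m N : ℕ) : ℕ :=
  ⌊√(N * (δ - ∑ k ∈ range m, (α k + β k)))⌋₊

namespace InOmegaHalf

variable {α β : ℕ → ℝ} {δ : ℝ}

noncomputable def diagram (h : InOmegaHalf α β δ) (m L N : ℕ) : YoungDiagram :=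
  hookDiagram m (squareSide α β δ m N) (antitone_natFloor_mul h.antitone_alpha L)
    (antitone_natFloor_mul h.antitone_beta L)

lemma colLen_zero_diagram_le (h : InOmegaHalf α β δ) (m L N : ℕ) :
    (h.diagram m L N).colLen 0 ≤ m + squareSide α β δ m N + ⌊(L : ℝ) * β 0⌋₊ + 1 :=
  colLen_zero_hookDiagram_le _ _

lemma summable_alpha (h : InOmegaHalf α β δ) : Summable α :=
  Summable.of_nonneg_of_le h.alpha_nonneg (fun k => le_add_of_nonneg_right (h.beta_nonneg k))
    h.summable

lemma summable_beta (h : InOmegaHalf α β δ) : Summable β :=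
  Summable.of_nonneg_of_le h.beta_nonneg (fun k => le_add_of_nonneg_left (h.alpha_nonneg k))
    h.summable

variable {m : ℕ → ℕ}

lemma tendsto_squareSide_div_sqrt (h : InOmegaHalf α β δ) (hm : Tendsto m atTop atTop) :
    Tendsto (fun N => (squareSide α β δ (m N) N : ℝ) / √N) atTop
      (𝓝 √(δ - ∑' k, (α k + β k))) := by
  have hS := (tendsto_const_nhds (x := δ)).sub (h.summable.hasSum.tendsto_sum_nat.comp hm)
  refine tendsto_natFloor_div (fun N => Real.sqrt_nonneg _) tendsto_sqrt_natCast_atTop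
    (hS.sqrt.congr' ?_)
  filter_upwards [eventually_gt_atTop 0] with N hN
  rw [Real.sqrt_mul N.cast_nonneg, mul_div_cancel_left₀ _ (by positivity)]
  rfl

lemma tendsto_side_div_sqrt (h : InOmegaHalf α β δ) (hm : Tendsto m atTop atTop)
    (hm' : Tendsto (fun N => (m N : ℝ) / √N) atTop (𝓝 0)) :
    Tendsto (fun N => ((m N + squareSide α β δ (m N) N : ℕ) : ℝ) / √N) atTop
      (𝓝 √(δ - ∑' k, (α k + β k))) := by
  simpa [add_div] using hm'.add (h.tendsto_squareSide_div_sqrt hm)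

lemma tendsto_side_div (h : InOmegaHalf α β δ) (hm : Tendsto m atTop atTop)
    (hm' : Tendsto (fun N => (m N : ℝ) / √N) atTop (𝓝 0)) :
    Tendsto (fun N => ((m N + squareSide α β δ (m N) N : ℕ) : ℝ) / N) atTop (𝓝 0) :=
  tendsto_div_natCast_of_tendsto_div_sqrt (h.tendsto_side_div_sqrt hm hm')

lemma tendsto_side_sq_div (h : InOmegaHalf α β δ) (hm : Tendsto m atTop atTop)
    (hm' : Tendsto (fun N => (m N : ℝ) / √N) atTop (𝓝 0)) :
    Tendsto (fun N => ((m N + squareSide α β δ (m N) N : ℕ) : ℝ) ^ 2 / N) atTop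
      (𝓝 (δ - ∑' k, (α k + β k))) := by
  have := (h.tendsto_side_div_sqrt hm hm').pow 2
  rw [Real.sq_sqrt (sub_nonneg.mpr h.tsum_le)] at this
  simpa only [div_pow, Real.sq_sqrt (Nat.cast_nonneg _)] using this

variable {L : ℕ → ℕ}

lemma tendsto_card_diagram_div (h : InOmegaHalf α β δ) (hm : Tendsto m atTop atTop)
    (hm' : Tendsto (fun N => (m N : ℝ) / √N) atTop (𝓝 0))
    (hL : Tendsto (fun N => (L N : ℝ) / N) atTop (𝓝 1)) :
    Tendsto (fun N => ((h.diagram (m N) (L N) N).card : ℝ) / N) atTop (𝓝 δ) := by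
  have hm'' := tendsto_div_natCast_of_tendsto_div_sqrt hm'
  have hlim := (((h.tendsto_side_sq_div hm hm').add
    (tendsto_sum_natFloor_mul_div h.alpha_nonneg h.summable_alpha hm hm'' hL)).add
    (tendsto_sum_natFloor_mul_div h.beta_nonneg h.summable_beta hm hm'' hL)).add
    (hm''.const_mul 2)
  have hδ : δ - ∑' k, (α k + β k) + ∑' k, α k + ∑' k, β k + 2 * 0 = δ := by
    rw [h.summable_alpha.tsum_add h.summable_beta]
    ring
  rw [hδ] at hlim
  refine hlim.congr fun N => ?_
  rw [diagram, card_hookDiagram]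
  push_cast
  simp only [sum_add_distrib, sum_const, card_range]
  ring

lemma tendsto_coords_of_eventuallyEq (h : InOmegaHalf α β δ) (hm : Tendsto m atTop atTop)
    (hm' : Tendsto (fun N => (m N : ℝ) / √N) atTop (𝓝 0))
    (hL : Tendsto (fun N => (L N : ℝ) / N) atTop (𝓝 1)) {μ : ℕ → YoungDiagram}
    (hμ : ∀ᶠ N in atTop, μ N = h.diagram (m N) (L N) N) :
    (∀ k, Tendsto (fun N => alphaCoord N (μ N) k) atTop (𝓝 (α k))) ∧
      (∀ k, Tendsto (fun N => betaCoord N (μ N) k) atTop (𝓝 (β k))) ∧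
      Tendsto (fun N => ((μ N).card : ℝ) / N) atTop (𝓝 δ) := by
  have hs := h.tendsto_side_div hm hm'
  have hA N := antitone_natFloor_mul h.antitone_alpha (L N)
  have hB N := antitone_natFloor_mul h.antitone_beta (L N)
  refine ⟨fun k => ?_, fun k => ?_, ?_⟩
  · refine (tendsto_alphaCoord_hookDiagram hA hB hm hs
      (fun k => tendsto_natFloor_mul_div hL (h.alpha_nonneg k)) k).congr' ?_
    filter_upwards [hμ] with N hN
    rw [hN, diagram]
  · refine (tendsto_betaCoord_hookDiagram hA hB hm hs
      (fun k => tendsto_natFloor_mul_div hL (h.beta_nonneg k)) k).congr' ?_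
    filter_upwards [hμ] with N hN
    rw [hN, diagram]
  · refine (h.tendsto_card_diagram_div hm hm' hL).congr' ?_
    filter_upwards [hμ] with N hN
    rw [hN]

end InOmegaHalf

/-- Every point `ω ∈ Ω` is the coordinatewise limit of a sequence `ι_N(λ^{(N)})` with
`λ^{(N)} ∈ SGN(N)`: every coordinate of `α⁺, β⁺, α⁻, β⁻` converges, and the coordinates
`δ± = |λ^{(N)±}|/N` converge to `δ±(ω)`.  In other words, `⋃_N ι_N(SGN(N))` is dense
in `Ω` in the product topology. -/
theorem iota_images_dense_in_Omega (ω : OmegaPoint) (hω : InOmega ω) :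
    ∃ l : (N : ℕ) → Signature N,
      (∀ k, Tendsto (fun N => alphaCoord N (sigPosDiagram (l N)) k) atTop (𝓝 (ω.alphaP k))) ∧
      (∀ k, Tendsto (fun N => betaCoord N (sigPosDiagram (l N)) k) atTop (𝓝 (ω.betaP k))) ∧
      (∀ k, Tendsto (fun N => alphaCoord N (sigNegDiagram (l N)) k) atTop (𝓝 (ω.alphaM k))) ∧
      (∀ k, Tendsto (fun N => betaCoord N (sigNegDiagram (l N)) k) atTop (𝓝 (ω.betaM k))) ∧
      Tendsto (fun N => ((sigPosDiagram (l N)).card : ℝ) / N) atTop (𝓝 ω.deltaP) ∧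
      Tendsto (fun N => ((sigNegDiagram (l N)).card : ℝ) / N) atTop (𝓝 ω.deltaM) := by
  have hP := hω.inOmegaHalf_pos
  have hM := hω.inOmegaHalf_neg
  have hβ : ω.betaP 0 + ω.betaM 0 ≤ 1 := hω.2.2.2.2.2.2.2.2.2.2.1
  set m : ℕ → ℕ := fun N => Nat.sqrt (Nat.sqrt N)
  have hm : Tendsto m atTop atTop := tendsto_natSqrt_natSqrt_atTop
  have hm' : Tendsto (fun N => (m N : ℝ) / √N) atTop (𝓝 0) := tendsto_natSqrt_natSqrt_div_sqrt
  set c : ℕ → ℕ := fun N => (m N + squareSide ω.alphaP ω.betaP ω.deltaP (m N) N) +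
    (m N + squareSide ω.alphaM ω.betaM ω.deltaM (m N) N) + 2
  have hc : Tendsto (fun N => (c N : ℝ) / N) atTop (𝓝 0) := by
    simpa [c, add_div] using ((hP.tendsto_side_div hm hm').add (hM.tendsto_side_div hm hm')).add
      (tendsto_const_div_atTop_nhds_zero_nat 2)
  set L : ℕ → ℕ := fun N => N - c N
  have hrows : ∀ᶠ N in atTop, (hP.diagram (m N) (L N) N).colLen 0 +
      (hM.diagram (m N) (L N) N).colLen 0 ≤ N := by
    filter_upwards [eventually_le_of_tendsto_div_zero hc] with N hcN
    have hfloor := natFloor_mul_add_natFloor_mul_le (hP.beta_nonneg 0) (hM.beta_nonneg 0) hβ (L N)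
    have hμ := hP.colLen_zero_diagram_le (m N) (L N) N
    have hν := hM.colLen_zero_diagram_le (m N) (L N) N
    simp only [L, c] at hfloor hμ hν hcN ⊢
    omega
  obtain ⟨l, hl⟩ := Signature.exists_eventually_diagrams_eq hrows
  have hL := tendsto_sub_div_natCast hc
  obtain ⟨hαP, hβP, hδP⟩ := hP.tendsto_coords_of_eventuallyEq hm hm' hL (hl.mono fun _ h => h.1)
  obtain ⟨hαM, hβM, hδM⟩ := hM.tendsto_coords_of_eventuallyEq hm hm' hL (hl.mono fun _ h => h.2)
  exact ⟨l, hαP, hβP, hαM, hβM, hδP, hδM⟩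
end

section
/- Let z, w ∈ ℂ ∖ ℤ and N ≥ 1. Then the weight W_N has power-law decay of exponent 2 Re(z + w) + 2N at infinity: there exist constants C ≥ c > 0 and L ∈ ℕ such that for every l ∈ ℤ with |l| ≥ L one has c · |l|^{−2Re(z+w)−2N} ≤ W_N(l) ≤ C · |l|^{−2Re(z+w)−2N}. -/
/-! By Euler's reflection formula, `|Γ(u - n)|⁻² = (|sin πu| / π)² |Γ(1 - u + n)|²` for `u ∉ ℤ`,
so on each tail `l = ±n` the weight is a positive constant times `|Γ(a + n)|² / |Γ(b + n)|²`,
with `b - a = z + w + N` in both cases. Euler's limit formula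
`Γ(s) = lim n^s n! / (s (s + 1) ⋯ (s + n))` gives `Γ(a + n) / Γ(b + n) ~ n^(a - b)`, hence
`W_N(±n) ~ s_± n^(-2 Re(z + w) - 2N)` with `s_± > 0`, and the bounds hold for `|l|` large. -/

/-- The weight `W_N(l) = |Γ(z - l)|^{-2} |Γ(w + N + 1 + l)|^{-2}` on `ℤ`. -/
noncomputable def W (z w : ℂ) (N : ℕ) (l : ℤ) : ℝ :=
  (‖Complex.Gamma (z - l)‖ ^ 2)⁻¹ *
    (‖Complex.Gamma (w + N + 1 + l)‖ ^ 2)⁻¹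

open Filter Topology Finset
open scoped Real

namespace Complex

variable {a b z : ℂ}

lemma add_natCast_ne_zero (ha : ∀ m : ℕ, a ≠ -m) (n : ℕ) : a + n ≠ 0 :=
  fun h => ha n (eq_neg_of_add_eq_zero_left h)

lemma Gamma_add_natCast_eq_mul_prod (ha : ∀ m : ℕ, a ≠ -m) (n : ℕ) :
    Gamma (a + n) = Gamma a * ∏ j ∈ range n, (a + j) := by
  induction n with
  | zero => simp
  | succ n ih =>
    rw [Nat.cast_succ, ← add_assoc, Gamma_add_one _ (add_natCast_ne_zero ha n), ih,
      prod_range_succ]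
    ring

lemma GammaSeq_mul_Gamma_add_natCast (ha : ∀ m : ℕ, a ≠ -m) (n : ℕ) :
    GammaSeq a n * ((a + n) * Gamma (a + n)) = n ^ a * n.factorial * Gamma a := by
  have hprod : ∏ j ∈ range (n + 1), (a + j) ≠ 0 :=
    prod_ne_zero_iff.mpr fun j _ => add_natCast_ne_zero ha j
  rw [GammaSeq, Gamma_add_natCast_eq_mul_prod ha, div_mul_eq_mul_div, div_eq_iff hprod,
    prod_range_succ]
  ring

lemma tendsto_add_natCast_div_add_natCast (a b : ℂ) :
    Tendsto (fun n : ℕ => (b + n) / (a + n)) atTop (𝓝 1) := by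
  have h := (tendsto_natCast_div_add_atTop a).div (tendsto_natCast_div_add_atTop b) one_ne_zero
  rw [div_one] at h
  refine h.congr' ?_
  filter_upwards [eventually_ne_atTop 0] with n hn
  rw [Pi.div_apply, div_div_div_cancel_left' _ _ (Nat.cast_ne_zero.mpr hn), add_comm b,
    add_comm a]

theorem tendsto_Gamma_add_natCast_div_mul_cpow (ha : ∀ m : ℕ, a ≠ -m) (hb : ∀ m : ℕ, b ≠ -m) :
    Tendsto (fun n : ℕ => Gamma (a + n) / Gamma (b + n) * (n : ℂ) ^ (b - a)) atTop (𝓝 1) := by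
  have hΓa := Gamma_ne_zero ha
  have hΓb := Gamma_ne_zero hb
  have h := (((GammaSeq_tendsto_Gamma b).div (GammaSeq_tendsto_Gamma a) hΓa).mul
    (tendsto_add_natCast_div_add_natCast a b)).mul_const (Gamma a / Gamma b)
  rw [mul_one, div_mul_div_cancel₀ hΓa, div_self hΓb] at h
  -- `GammaSeq b n / GammaSeq a n = n ^ (b - a) (a + n) Γ(a + n) Γ(b) / ((b + n) Γ(b + n) Γ(a))`
  refine h.congr' ?_
  filter_upwards [eventually_ne_atTop 0] with n hn
  have hn' : (n : ℂ) ≠ 0 := Nat.cast_ne_zero.mpr hn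
  have hΓan : Gamma (a + n) ≠ 0 :=
    Gamma_ne_zero fun m h => ha (m + n) (by push_cast; linear_combination h)
  have hΓbn : Gamma (b + n) ≠ 0 :=
    Gamma_ne_zero fun m h => hb (m + n) (by push_cast; linear_combination h)
  have hSa := eq_div_of_mul_eq (mul_ne_zero (add_natCast_ne_zero ha n) hΓan)
    (GammaSeq_mul_Gamma_add_natCast ha n)
  have hSb := eq_div_of_mul_eq (mul_ne_zero (add_natCast_ne_zero hb n) hΓbn)
    (GammaSeq_mul_Gamma_add_natCast hb n)
  have hpow : (n : ℂ) ^ b = n ^ a * n ^ (b - a) := by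
    rw [← cpow_add _ _ hn', add_sub_cancel]
  have hna : (n : ℂ) ^ a ≠ 0 := by simp [cpow_eq_zero_iff, hn']
  have han := add_natCast_ne_zero ha n
  have hbn := add_natCast_ne_zero hb n
  have hfac : (n.factorial : ℂ) ≠ 0 := Nat.cast_ne_zero.mpr n.factorial_ne_zero
  simp only [Pi.div_apply, hSa, hSb, hpow]
  field_simp

theorem tendsto_norm_Gamma_add_natCast_div_sq_mul_rpow (ha : ∀ m : ℕ, a ≠ -m)
    (hb : ∀ m : ℕ, b ≠ -m) :
    Tendsto (fun n : ℕ => ‖Gamma (a + n)‖ ^ 2 / ‖Gamma (b + n)‖ ^ 2 * (n : ℝ) ^ (2 * (b - a).re))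
      atTop (𝓝 1) := by
  have h := ((tendsto_Gamma_add_natCast_div_mul_cpow ha hb).norm.pow 2)
  rw [norm_one, one_pow] at h
  refine h.congr' ?_
  filter_upwards [eventually_gt_atTop 0] with n hn
  rw [norm_mul, norm_div, norm_natCast_cpow_of_pos hn, mul_pow, div_pow, mul_comm 2,
    Real.rpow_mul n.cast_nonneg, Real.rpow_two]

lemma norm_sin_pi_mul_sub_intCast (z : ℂ) (n : ℤ) : ‖sin (π * (z - n))‖ = ‖sin (π * z)‖ := by
  rw [mul_sub, mul_comm (π : ℂ) n, sin_antiperiodic.sub_int_mul_eq n, norm_mul]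
  simp

lemma sin_pi_mul_ne_zero_of_ne_intCast (hz : ∀ n : ℤ, z ≠ n) : sin (π * z) ≠ 0 :=
  sin_pi_mul_ne_zero fun ⟨n, hn⟩ => hz n hn.symm

lemma inv_norm_Gamma_sub_intCast_sq (hz : ∀ n : ℤ, z ≠ n) (n : ℤ) :
    (‖Gamma (z - n)‖ ^ 2)⁻¹ = (‖sin (π * z)‖ / π) ^ 2 * ‖Gamma (1 - z + n)‖ ^ 2 := by
  have hsin := sin_pi_mul_ne_zero_of_ne_intCast hz
  have hrefl : ‖Gamma (z - n)‖ * ‖Gamma (1 - z + n)‖ = π / ‖sin (π * z)‖ := by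
    rw [← norm_mul, show 1 - z + n = 1 - (z - n) by ring, Gamma_mul_Gamma_one_sub, norm_div,
      norm_sin_pi_mul_sub_intCast, norm_real, Real.norm_of_nonneg Real.pi_pos.le]
  apply inv_eq_of_mul_eq_one_right
  calc ‖Gamma (z - n)‖ ^ 2 * ((‖sin (π * z)‖ / π) ^ 2 * ‖Gamma (1 - z + n)‖ ^ 2)
      = (‖Gamma (z - n)‖ * ‖Gamma (1 - z + n)‖ * (‖sin (π * z)‖ / π)) ^ 2 := by ring
    _ = 1 := by
      rw [hrefl]
      field_simp [norm_ne_zero_iff.mpr hsin, Real.pi_ne_zero]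

end Complex

section Weight

open Complex

variable {z w : ℂ}

lemma W_natCast (hz : ∀ n : ℤ, z ≠ n) (N n : ℕ) :
    W z w N n = (‖sin (π * z)‖ / π) ^ 2 *
      (‖Gamma (1 - z + n)‖ ^ 2 / ‖Gamma (w + N + 1 + n)‖ ^ 2) := by
  rw [W, inv_norm_Gamma_sub_intCast_sq hz, Int.cast_natCast]
  ring

lemma W_neg_natCast {N : ℕ} (hw : ∀ n : ℤ, w + N + 1 ≠ n) (n : ℕ) :
    W z w N (-n) = (‖sin (π * (w + N + 1))‖ / π) ^ 2 *
      (‖Gamma (-w - N + n)‖ ^ 2 / ‖Gamma (z + n)‖ ^ 2) := by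
  rw [W, Int.cast_neg, ← sub_eq_add_neg, inv_norm_Gamma_sub_intCast_sq hw, Int.cast_natCast,
    sub_neg_eq_add, show 1 - (w + N + 1) + n = -w - N + n by ring]
  ring

theorem tendsto_W_natCast_mul_rpow {N : ℕ} (hz : ∀ n : ℤ, z ≠ n) (hw : ∀ n : ℤ, w + N + 1 ≠ n) :
    Tendsto (fun n : ℕ => W z w N n * (n : ℝ) ^ (2 * (z + w).re + 2 * N)) atTop
      (𝓝 ((‖sin (π * z)‖ / π) ^ 2)) := by
  have ha : ∀ m : ℕ, 1 - z ≠ -m := fun m h => hz (1 + m) (by push_cast; linear_combination -h)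
  have hb : ∀ m : ℕ, w + N + 1 ≠ -m := fun m h => hw (-m) (by push_cast; exact h)
  have hexp : 2 * (w + N + 1 - (1 - z)).re = 2 * (z + w).re + 2 * N := by
    simp only [sub_re, add_re, one_re, natCast_re]
    ring
  have h := (tendsto_norm_Gamma_add_natCast_div_sq_mul_rpow ha hb).const_mul
    ((‖sin (π * z)‖ / π) ^ 2)
  rw [mul_one, hexp] at h
  refine h.congr fun n => ?_
  rw [W_natCast hz, mul_assoc]

theorem tendsto_W_neg_natCast_mul_rpow {N : ℕ} (hz : ∀ n : ℤ, z ≠ n)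
    (hw : ∀ n : ℤ, w + N + 1 ≠ n) :
    Tendsto (fun n : ℕ => W z w N (-n) * (n : ℝ) ^ (2 * (z + w).re + 2 * N)) atTop
      (𝓝 ((‖sin (π * (w + N + 1))‖ / π) ^ 2)) := by
  have ha : ∀ m : ℕ, -w - N ≠ -m := fun m h => hw (m + 1) (by push_cast; linear_combination -h)
  have hb : ∀ m : ℕ, z ≠ -m := fun m h => hz (-m) (by push_cast; exact h)
  have hexp : 2 * (z - (-w - N)).re = 2 * (z + w).re + 2 * N := by
    simp only [sub_re, add_re, neg_re, natCast_re]
    ring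
  have h := (tendsto_norm_Gamma_add_natCast_div_sq_mul_rpow ha hb).const_mul
    ((‖sin (π * (w + N + 1))‖ / π) ^ 2)
  rw [mul_one, hexp] at h
  refine h.congr fun n => ?_
  rw [W_neg_natCast hw, mul_assoc]

end Weight

lemma eventually_bounds_of_tendsto_mul_rpow {f : ℕ → ℝ} {α s : ℝ} (hs : 0 < s)
    (h : Tendsto (fun n : ℕ => f n * (n : ℝ) ^ α) atTop (𝓝 s)) :
    ∀ᶠ n : ℕ in atTop, s / 2 * (n : ℝ) ^ (-α) ≤ f n ∧ f n ≤ 2 * s * (n : ℝ) ^ (-α) := by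
  filter_upwards [h.eventually (Ioo_mem_nhds (half_lt_self hs) (by linarith : s < 2 * s)),
    eventually_gt_atTop 0] with n hfn hn
  have hn' : (0 : ℝ) < n := Nat.cast_pos.mpr hn
  have hf : f n = f n * (n : ℝ) ^ α * (n : ℝ) ^ (-α) := by
    rw [mul_assoc, ← Real.rpow_add hn', add_neg_cancel, Real.rpow_zero, mul_one]
  have hpos := (Real.rpow_pos_of_pos hn' (-α)).le
  rw [hf]
  exact ⟨mul_le_mul_of_nonneg_right hfn.1.le hpos, mul_le_mul_of_nonneg_right hfn.2.le hpos⟩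

theorem exists_bounds_of_tendsto_mul_rpow {F : ℤ → ℝ} {α s t : ℝ} (hs : 0 < s) (ht : 0 < t)
    (hpos : Tendsto (fun n : ℕ => F n * (n : ℝ) ^ α) atTop (𝓝 s))
    (hneg : Tendsto (fun n : ℕ => F (-n) * (n : ℝ) ^ α) atTop (𝓝 t)) :
    ∃ (c C : ℝ) (L : ℕ), 0 < c ∧ c ≤ C ∧ ∀ l : ℤ, (L : ℤ) ≤ |l| →
      c * ((|l| : ℤ) : ℝ) ^ (-α) ≤ F l ∧ F l ≤ C * ((|l| : ℤ) : ℝ) ^ (-α) := by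
  obtain ⟨L₁, hL₁⟩ := eventually_atTop.mp (eventually_bounds_of_tendsto_mul_rpow hs hpos)
  obtain ⟨L₂, hL₂⟩ := eventually_atTop.mp (eventually_bounds_of_tendsto_mul_rpow ht hneg)
  refine ⟨min s t / 2, 2 * max s t, max L₁ L₂, by positivity, by
    linarith [min_le_max (a := s) (b := t), lt_min hs ht], ?_⟩
  intro l hl
  obtain ⟨n, rfl | rfl⟩ := Int.eq_nat_or_neg l
  all_goals
    simp only [abs_neg, Nat.abs_cast, Int.cast_natCast, Nat.cast_le, max_le_iff] at hl ⊢
  · obtain ⟨h₁, h₂⟩ := hL₁ n hl.1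
    exact ⟨le_trans (by gcongr; exact min_le_left s t) h₁,
      h₂.trans (by gcongr; exact le_max_left s t)⟩
  · obtain ⟨h₁, h₂⟩ := hL₂ n hl.2
    exact ⟨le_trans (by gcongr; exact min_le_right s t) h₁,
      h₂.trans (by gcongr; exact le_max_right s t)⟩

theorem weight_power_law_decay_general (z w : ℂ) (hz : ∀ n : ℤ, z ≠ (n : ℂ))
    (hw : ∀ n : ℤ, w ≠ (n : ℂ)) (N : ℕ) :
    ∃ (c C : ℝ) (L : ℕ), 0 < c ∧ c ≤ C ∧
      ∀ l : ℤ, (L : ℤ) ≤ |l| →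
        c * ((|l| : ℤ) : ℝ) ^ (-(2 * (z + w).re) - 2 * N) ≤ W z w N l ∧
        W z w N l ≤ C * ((|l| : ℤ) : ℝ) ^ (-(2 * (z + w).re) - 2 * N) := by
  have hw' : ∀ n : ℤ, w + N + 1 ≠ n :=
    fun n h => hw (n - N - 1) (by push_cast; linear_combination h)
  have hsin : ∀ u : ℂ, (∀ n : ℤ, u ≠ n) → 0 < (‖Complex.sin (π * u)‖ / π) ^ 2 := fun u hu => by
    have := norm_pos_iff.mpr (Complex.sin_pi_mul_ne_zero_of_ne_intCast hu)
    positivity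
  rw [show -(2 * (z + w).re) - 2 * N = -(2 * (z + w).re + 2 * N) by ring]
  exact exists_bounds_of_tendsto_mul_rpow (hsin z hz) (hsin _ hw')
    (tendsto_W_natCast_mul_rpow hz hw') (tendsto_W_neg_natCast_mul_rpow hz hw')

/-- For `z, w ∈ ℂ ∖ ℤ` and `N ≥ 1`, the weight `W_N` has power-law decay of exponent
`2 Re(z+w) + 2N` at infinity: there are constants `C ≥ c > 0` and `L ∈ ℕ` such that
`c · |l|^{-2Re(z+w)-2N} ≤ W_N(l) ≤ C · |l|^{-2Re(z+w)-2N}` whenever `|l| ≥ L`. -/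
theorem weight_power_law_decay (z w : ℂ) (hz : ∀ n : ℤ, z ≠ (n : ℂ))
    (hw : ∀ n : ℤ, w ≠ (n : ℂ)) (N : ℕ) (hN : 1 ≤ N) :
    ∃ (c C : ℝ) (L : ℕ), 0 < c ∧ c ≤ C ∧
      ∀ l : ℤ, (L : ℤ) ≤ |l| →
        c * ((|l| : ℤ) : ℝ) ^ (-(2 * (z + w).re) - 2 * N) ≤ W z w N l ∧
        W z w N l ≤ C * ((|l| : ℤ) : ℝ) ^ (-(2 * (z + w).re) - 2 * N) :=
  weight_power_law_decay_general z w hz hw N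
end
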